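/- For d ∈ {0,1,...,n} and z ∈ ℂ, the Y(gl_n)-module Φ^{−d}_z obtained by pulling back Λ^d(ℂ^n) through the homomorphism π ∘ ω ∘ τ_{z−1} is isomorphic to the tensor product Φ^{n−d}_z ⊗ Δ'_z, where Φ^{n−d}_z is the pullback of Λ^{n−d}(ℂ^n) through π ∘ τ_z and Δ'_z is the one-dimensional module with T_{ij}(u) acting as δ_{ij}(u−z)/(u−z+1). Explicitly, the map x ↦ R(x) ⊗ (x_1⋯x_n), for x in degree d of the Grassmann algebra G_n, is an isomorphism of Y(gl_n)-modules. -/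

import Mathlib

abbrev Grass (n : ℕ) := ExteriorAlgebra ℂ (Fin n → ℂ)

/-- Left multiplication by the generator `x_i`. -/
noncomputable def mulX (n : ℕ) (i : Fin n) : Module.End ℂ (Grass n) :=
  LinearMap.mulLeft ℂ (ExteriorAlgebra.ι ℂ (Pi.single i 1))

/-- The top element `x_1 ⋯ x_n`. -/
noncomputable def topEl (n : ℕ) : Grass n :=
  ((List.finRange n).map fun i => ExteriorAlgebra.ι ℂ (Pi.single i (1 : ℂ))).prod


/-- The degree-`d` component `Λ^d(ℂⁿ) ⊆ G_n`: the span of products of `d` generators. -/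
noncomputable def GrassDeg (n d : ℕ) : Submodule ℂ (Grass n) :=
  Submodule.span ℂ {x | ∃ l : List (Fin n → ℂ),
    l.length = d ∧ x = (l.map (ExteriorAlgebra.ι ℂ)).prod}

/-- Coefficient of `u^{-r}` in the action δ_{ij} − x_j∂_i/(u−z+1) of `T_{ij}(u)`
on the covector-type module `Φ^{−d}_z`. -/
noncomputable def covCoeff (n : ℕ) (z : ℂ) (der : Fin n → Module.End ℂ (Grass n))
    (r : ℕ) (i j : Fin n) : Module.End ℂ (Grass n) :=
  if r = 0 then (if i = j then 1 else 0)
  else (-(z - 1) ^ (r - 1)) • (mulX n j * der i)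

/-- Coefficient of `u^{-r}` in the action
(δ_{ij} + x_i∂_j/(u−z)) · (u−z)/(u−z+1) of `T_{ij}(u)` on `Φ^{n−d}_z ⊗ Δ'_z`. -/
noncomputable def vecDetCoeff (n : ℕ) (z : ℂ) (der : Fin n → Module.End ℂ (Grass n))
    (r : ℕ) (i j : Fin n) : Module.End ℂ (Grass n) :=
  ∑ s ∈ Finset.range (r + 1),
    (if r - s = 0 then (1 : ℂ) else -(z - 1) ^ (r - s - 1)) •
      (if s = 0 then (if i = j then 1 else 0)
        else z ^ (s - 1) • (mulX n i * der j))

/-! `R` exchanges wedging and contracting. Since `S` is multiplicative and swaps `L_{xᵢ}` with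
`∂ᵢ`, `R(v ∧ x) = ∂_v R(x)`; applying `S` to the graded Leibniz rule
`L_{∂_v x} = ∂_v L_x - (-1)^k L_x ∂_v` on `Λ^k` and using `v ∧ x₁⋯xₙ = 0` gives
`R(∂_v x) = v ∧ R(x)`. Hence `R` maps `Λ^k` into `Λ^{n-k}`, `R ∘ R` is the sign
`∂₁⋯∂ₙ(x₁⋯xₙ) = (-1)^{n(n-1)/2}`, so `R` is bijective, and
`R(x_j ∂_i x) = δ_{ij} R(x) - x_i ∂_j R(x)`. Comparing coefficients of `u^{-r}` then comes down
to `(u-z)/(u-z+1) · 1/(u-z) = 1/(u-z+1)`. -/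

open ExteriorAlgebra

section Contraction

variable {R M : Type*} [CommRing R] [AddCommGroup M] [Module R M]

theorem ι_mul_mem_exteriorPower (m : M) {k : ℕ} {x : ExteriorAlgebra R M}
    (hx : x ∈ ⋀[R]^k M) : ι R m * x ∈ ⋀[R]^(k + 1) M := by
  rw [exteriorPower, pow_succ']
  exact Submodule.mul_mem_mul (LinearMap.mem_range_self _ m) hx

@[elab_as_elim]
theorem exteriorPower_induction {C : ∀ k (x : ExteriorAlgebra R M), x ∈ ⋀[R]^k M → Prop}
    (algebraMap : ∀ r, C 0 (algebraMap R _ r) (Submodule.algebraMap_mem r))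
    (add : ∀ k x y hx hy, C k x hx → C k y hy → C k (x + y) (add_mem hx hy))
    (ι_mul : ∀ k m x hx, C k x hx → C (k + 1) (ι R m * x) (ι_mul_mem_exteriorPower m hx))
    {k : ℕ} {x : ExteriorAlgebra R M} (hx : x ∈ ⋀[R]^k M) : C k x hx := by
  induction hx using Submodule.pow_induction_on_left' with
  | algebraMap r => exact algebraMap r
  | add x y k _ _ hx hy => exact add k x y _ _ hx hy
  | mem_mul m hm k x hx ih =>
    obtain ⟨v, rfl⟩ := hm
    exact ι_mul k v x hx ih

theorem span_prod_map_ι_eq_exteriorPower (d : ℕ) :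
    Submodule.span R {x | ∃ l : List M, l.length = d ∧ x = (l.map (ι R)).prod} = ⋀[R]^d M := by
  rw [← ιMulti_span_fixedDegree]
  congr 1
  ext x
  constructor
  · rintro ⟨l, rfl, rfl⟩
    refine ⟨l.get, ?_⟩
    conv_rhs => rw [← List.ofFn_get l]
    rw [ιMulti_apply, List.map_ofFn]
    rfl
  · rintro ⟨v, rfl⟩
    exact ⟨List.ofFn v, List.length_ofFn, by rw [ιMulti_apply, List.map_ofFn]; rfl⟩

structure IsContraction (f : M → R) (D : Module.End R (ExteriorAlgebra R M)) : Prop where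
  map_one : D 1 = 0
  map_ι_mul : ∀ m x, D (ι R m * x) = f m • x - ι R m * D x

namespace IsContraction

variable {f : M → R} {D : Module.End R (ExteriorAlgebra R M)}

theorem map_algebraMap (hD : IsContraction f D) (r : R) : D (algebraMap R _ r) = 0 := by
  rw [Algebra.algebraMap_eq_smul_one, map_smul, hD.map_one, smul_zero]

theorem sum {κ : Type*} [Fintype κ] {f : κ → M → R} {D : κ → Module.End R (ExteriorAlgebra R M)}
    (hD : ∀ i, IsContraction (f i) (D i)) (c : κ → R) :
    IsContraction (fun m => ∑ i, c i * f i m) (∑ i, c i • D i) where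
  map_one := by simp [LinearMap.sum_apply, (hD _).map_one]
  map_ι_mul m x := by
    simp only [LinearMap.sum_apply, LinearMap.smul_apply, (hD _).map_ι_mul, smul_sub,
      Finset.sum_sub_distrib, Finset.sum_smul, Finset.mul_sum, smul_smul, mul_smul_comm]

theorem mem_exteriorPower (hD : IsContraction f D) {k : ℕ} {x : ExteriorAlgebra R M}
    (hx : x ∈ ⋀[R]^k M) : D x ∈ ⋀[R]^(k - 1) M := by
  induction hx using exteriorPower_induction with
  | algebraMap r => rw [hD.map_algebraMap]; exact zero_mem _
  | add k x y _ _ hx hy => rw [map_add]; exact add_mem hx hy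
  | ι_mul k m x hx ih =>
    rw [hD.map_ι_mul]
    refine sub_mem (Submodule.smul_mem _ _ hx) ?_
    cases k with
    | zero =>
      rw [exteriorPower, pow_zero] at hx
      obtain ⟨r, rfl⟩ := Submodule.mem_one.mp hx
      rw [hD.map_algebraMap, mul_zero]
      exact zero_mem _
    | succ k => exact ι_mul_mem_exteriorPower m ih

theorem map_mul_of_mem (hD : IsContraction f D) {k : ℕ} {x : ExteriorAlgebra R M}
    (hx : x ∈ ⋀[R]^k M) (y : ExteriorAlgebra R M) :
    D (x * y) = D x * y + (-1 : R) ^ k • (x * D y) := by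
  induction hx using exteriorPower_induction with
  | algebraMap r =>
    simp only [Algebra.algebraMap_eq_smul_one, smul_mul_assoc, one_mul, map_smul, hD.map_one]
    simp
  | add k x x' _ _ hx hx' =>
    rw [add_mul, map_add, map_add, hx, hx', add_mul, add_mul, smul_add]
    abel
  | ι_mul k m x _ ih =>
    rw [mul_assoc, hD.map_ι_mul, ih, hD.map_ι_mul, pow_succ, mul_add, sub_mul, smul_mul_assoc,
      mul_smul_comm, ← mul_assoc, ← mul_assoc]
    module

theorem mulLeft_map_of_mem (hD : IsContraction f D) {k : ℕ} {x : ExteriorAlgebra R M}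
    (hx : x ∈ ⋀[R]^k M) :
    LinearMap.mulLeft R (D x)
      = D * LinearMap.mulLeft R x - (-1 : R) ^ k • (LinearMap.mulLeft R x * D) := by
  ext y
  simp [hD.map_mul_of_mem hx]

theorem map_ι_mul_of_eq_zero (hD : IsContraction f D) {m : M} (hm : f m = 0)
    (x : ExteriorAlgebra R M) : D (ι R m * x) = -(ι R m * D x) := by
  rw [hD.map_ι_mul, hm, zero_smul, zero_sub]

end IsContraction

section Family

variable {κ : Type*} {f : κ → M → R} {D : κ → Module.End R (ExteriorAlgebra R M)}

theorem prod_map_apply_ι_mul_of_isContraction (hD : ∀ j, IsContraction (f j) (D j)) (m : M) :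
    ∀ l : List κ, (∀ j ∈ l, f j m = 0) → ∀ x,
      (l.map D).prod (ι R m * x) = (-1 : R) ^ l.length • (ι R m * (l.map D).prod x)
  | [], _, x => by simp
  | j :: l, hl, x => by
    rw [List.map_cons, List.prod_cons, Module.End.mul_apply,
      prod_map_apply_ι_mul_of_isContraction hD m l (fun j' hj' => hl j' (by simp [hj'])) x,
      map_smul, (hD j).map_ι_mul_of_eq_zero (hl j (by simp)), List.length_cons, pow_succ,
      mul_comm, ← smul_smul, neg_one_smul, Module.End.mul_apply, smul_neg]

theorem prod_map_apply_prod_ι_of_isContraction [DecidableEq κ]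
    (hD : ∀ j, IsContraction (f j) (D j)) (e : κ → M)
    (he : ∀ i j, f j (e i) = if j = i then 1 else 0) :
    ∀ l : List κ, l.Nodup →
      (l.map D).prod ((l.map fun i => ι R (e i)).prod) = (-1 : R) ^ l.length.choose 2 • 1
  | [], _ => by simp
  | i :: l, hl => by
    obtain ⟨hi, hl⟩ := List.nodup_cons.mp hl
    rw [List.map_cons, List.prod_cons, List.map_cons, List.prod_cons, Module.End.mul_apply,
      prod_map_apply_ι_mul_of_isContraction hD (e i) l
        (fun j hj => by rw [he, if_neg (ne_of_mem_of_not_mem hj hi)]),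
      prod_map_apply_prod_ι_of_isContraction hD e he l hl, map_smul, (hD i).map_ι_mul,
      he, if_pos rfl, map_smul, (hD i).map_one]
    simp [smul_smul, Nat.choose_succ_succ', pow_add]

end Family

end Contraction

theorem sum_range_ite_mul_pow {K : Type*} [CommRing K] (z : K) (r : ℕ) :
    ∑ s ∈ Finset.range (r + 1), (if r - s = 0 then 1 else -(z - 1) ^ (r - s - 1)) * z ^ s
      = (z - 1) ^ r := by
  have hgeom := geom_sum₂_mul z (z - 1) r
  rw [sub_sub_cancel, mul_one] at hgeom
  rw [Finset.sum_range_succ, Nat.sub_self, if_pos rfl, one_mul]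
  rw [Finset.sum_congr rfl fun s hs => by
    rw [if_neg (Nat.sub_ne_zero_of_lt (Finset.mem_range.mp hs)), Nat.sub_right_comm, neg_mul]]
  simp only [Finset.sum_neg_distrib, mul_comm ((z - 1) ^ _), hgeom]
  ring

section Grassmann

variable {n : ℕ}

theorem grassDeg_eq_exteriorPower (d : ℕ) : GrassDeg n d = ⋀[ℂ]^d (Fin n → ℂ) :=
  span_prod_map_ι_eq_exteriorPower d

theorem topEl_mem_exteriorPower : topEl n ∈ ⋀[ℂ]^n (Fin n → ℂ) := by
  rw [← grassDeg_eq_exteriorPower]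
  exact Submodule.subset_span ⟨(List.finRange n).map (Pi.single · 1), by simp,
    by rw [List.map_map]; rfl⟩

theorem ι_eq_sum_smul_ι_single (v : Fin n → ℂ) : ι ℂ v = ∑ i, v i • ι ℂ (Pi.single i 1) := by
  conv_lhs => rw [← Finset.univ_sum_single v]
  simp only [map_sum, ← map_smul, ← Pi.single_smul', smul_eq_mul, mul_one]

theorem ι_mul_topEl (v : Fin n → ℂ) : ι ℂ v * topEl n = 0 := by
  have h := ι_mul_prod_list (R := ℂ) (fun i : Fin n => (Pi.single i 1 : Fin n → ℂ))
  simp only [List.ofFn_eq_map] at h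
  simp [ι_eq_sum_smul_ι_single v, Finset.sum_mul, topEl, h]

theorem mulLeft_ι_eq_sum (v : Fin n → ℂ) :
    LinearMap.mulLeft ℂ (ι ℂ v) = ∑ i, v i • mulX n i := by
  ext x
  simp [ι_eq_sum_smul_ι_single v, Finset.sum_mul, LinearMap.sum_apply, mulX]

noncomputable def contractWith (der : Fin n → Module.End ℂ (Grass n)) (v : Fin n → ℂ) :
    Module.End ℂ (Grass n) :=
  ∑ i, v i • der i

variable {der : Fin n → Module.End ℂ (Grass n)}

theorem contractWith_single (i : Fin n) : contractWith der (Pi.single i 1) = der i := by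
  simp [contractWith, Pi.single_apply]

theorem isContraction_contractWith (hder : ∀ i, IsContraction (fun v : Fin n → ℂ => v i) (der i))
    (v : Fin n → ℂ) : IsContraction (fun w => ∑ i, v i * w i) (contractWith der v) :=
  IsContraction.sum hder v

variable {S : Module.End ℂ (Grass n) ≃ₐ[ℂ] Module.End ℂ (Grass n)}

theorem map_mulLeft_ι (hSx : ∀ i, S (mulX n i) = der i) (v : Fin n → ℂ) :
    S (LinearMap.mulLeft ℂ (ι ℂ v)) = contractWith der v := by
  simp [mulLeft_ι_eq_sum, hSx, contractWith]

theorem map_contractWith (hSd : ∀ i, S (der i) = mulX n i) (v : Fin n → ℂ) :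
    S (contractWith der v) = LinearMap.mulLeft ℂ (ι ℂ v) := by
  simp [mulLeft_ι_eq_sum, hSd, contractWith]

variable (S) in
noncomputable def complementMap : Grass n →ₗ[ℂ] Grass n :=
  LinearMap.applyₗ (topEl n) ∘ₗ (S.toAlgHom.comp (Algebra.lmul ℂ (Grass n))).toLinearMap

theorem complementMap_apply (x : Grass n) :
    complementMap S x = S (LinearMap.mulLeft ℂ x) (topEl n) := rfl

theorem complementMap_one : complementMap S 1 = topEl n := by
  rw [complementMap_apply, LinearMap.mulLeft_one, ← Module.End.one_eq_id, map_one,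
    Module.End.one_apply]

theorem complementMap_ι_mul (hSx : ∀ i, S (mulX n i) = der i) (v : Fin n → ℂ) (x : Grass n) :
    complementMap S (ι ℂ v * x) = contractWith der v (complementMap S x) := by
  rw [complementMap_apply, LinearMap.mulLeft_mul, ← Module.End.mul_eq_comp, map_mul,
    map_mulLeft_ι hSx, Module.End.mul_apply, complementMap_apply]

theorem complementMap_contractWith (hder : ∀ i, IsContraction (fun v : Fin n → ℂ => v i) (der i))
    (hSd : ∀ i, S (der i) = mulX n i) {k : ℕ} {x : Grass n} (hx : x ∈ ⋀[ℂ]^k (Fin n → ℂ))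
    (v : Fin n → ℂ) :
    complementMap S (contractWith der v x) = ι ℂ v * complementMap S x := by
  rw [complementMap_apply, (isContraction_contractWith hder v).mulLeft_map_of_mem hx, map_sub,
    map_smul, map_mul, map_mul, map_contractWith hSd]
  simp [ι_mul_topEl, complementMap_apply]

theorem complementMap_mem (hder : ∀ i, IsContraction (fun v : Fin n → ℂ => v i) (der i))
    (hSx : ∀ i, S (mulX n i) = der i) {k : ℕ} {x : Grass n} (hx : x ∈ ⋀[ℂ]^k (Fin n → ℂ)) :
    complementMap S x ∈ ⋀[ℂ]^(n - k) (Fin n → ℂ) := by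
  induction hx using exteriorPower_induction with
  | algebraMap r =>
    rw [Algebra.algebraMap_eq_smul_one, map_smul, complementMap_one]
    exact Submodule.smul_mem _ r topEl_mem_exteriorPower
  | add k x y _ _ hx hy => rw [map_add]; exact add_mem hx hy
  | ι_mul k v x _ ih =>
    rw [complementMap_ι_mul hSx, Nat.sub_add_eq]
    exact (isContraction_contractWith hder v).mem_exteriorPower ih

theorem complementMap_topEl (hder : ∀ i, IsContraction (fun v : Fin n → ℂ => v i) (der i))
    (hSx : ∀ i, S (mulX n i) = der i) :
    complementMap S (topEl n) = (-1 : ℂ) ^ n.choose 2 • 1 := by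
  have hS : S (LinearMap.mulLeft ℂ (topEl n)) = ((List.finRange n).map der).prod := by
    calc S (LinearMap.mulLeft ℂ (topEl n))
        = S.toAlgHom.comp (Algebra.lmul ℂ (Grass n)) (topEl n) := rfl
      _ = ((List.finRange n).map fun i => S (mulX n i)).prod := by
        rw [topEl, map_list_prod, List.map_map]; rfl
      _ = ((List.finRange n).map der).prod := by simp only [hSx]
  rw [complementMap_apply, hS, topEl,
    prod_map_apply_prod_ι_of_isContraction hder (Pi.single · 1)
      (fun i j => Pi.single_apply i 1 j) _ (List.nodup_finRange n), List.length_finRange]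

theorem complementMap_complementMap (hder : ∀ i, IsContraction (fun v : Fin n → ℂ => v i) (der i))
    (hSx : ∀ i, S (mulX n i) = der i) (hSd : ∀ i, S (der i) = mulX n i) {k : ℕ} {x : Grass n}
    (hx : x ∈ ⋀[ℂ]^k (Fin n → ℂ)) :
    complementMap S (complementMap S x) = (-1 : ℂ) ^ n.choose 2 • x := by
  induction hx using exteriorPower_induction with
  | algebraMap r =>
    rw [Algebra.algebraMap_eq_smul_one, map_smul, map_smul, complementMap_one,
      complementMap_topEl hder hSx, smul_comm]
  | add k x y _ _ hx hy => rw [map_add, map_add, hx, hy, smul_add]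
  | ι_mul k v x hx ih =>
    rw [complementMap_ι_mul hSx,
      complementMap_contractWith hder hSd (complementMap_mem hder hSx hx), ih, mul_smul_comm]

theorem complementMap_bijOn (hder : ∀ i, IsContraction (fun v : Fin n → ℂ => v i) (der i))
    (hSx : ∀ i, S (mulX n i) = der i) (hSd : ∀ i, S (der i) = mulX n i) {d : ℕ} (hd : d ≤ n) :
    Set.BijOn (complementMap S) (⋀[ℂ]^d (Fin n → ℂ)) (⋀[ℂ]^(n - d) (Fin n → ℂ)) := by
  set ε : ℂ := (-1) ^ n.choose 2
  have hε : ε * ε = 1 := by rw [← mul_pow]; norm_num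
  have hRR : ∀ {k} {x : Grass n}, x ∈ ⋀[ℂ]^k (Fin n → ℂ) →
      ε • complementMap S (complementMap S x) = x := fun hx => by
    rw [complementMap_complementMap hder hSx hSd hx, smul_smul, hε, one_smul]
  refine Set.InvOn.bijOn (f' := fun y => ε • complementMap S y)
    ⟨fun x hx => hRR hx, fun y hy => (map_smul _ ε _).trans (hRR hy)⟩
    (fun x hx => complementMap_mem hder hSx hx) fun y hy => ?_
  rw [SetLike.mem_coe, ← Nat.sub_sub_self hd]
  exact Submodule.smul_mem _ ε (complementMap_mem hder hSx hy)

theorem complementMap_mulX_mul_der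
    (hder : ∀ i, IsContraction (fun v : Fin n → ℂ => v i) (der i))
    (hSx : ∀ i, S (mulX n i) = der i) (hSd : ∀ i, S (der i) = mulX n i) {k : ℕ} {x : Grass n}
    (hx : x ∈ ⋀[ℂ]^k (Fin n → ℂ)) (i j : Fin n) :
    complementMap S ((mulX n j * der i) x)
      = (if i = j then (1 : ℂ) else 0) • complementMap S x
        - (mulX n i * der j) (complementMap S x) := by
  have hderi : der i x = contractWith der (Pi.single i 1) x := by rw [contractWith_single]
  rw [Module.End.mul_apply, mulX, LinearMap.mulLeft_apply, complementMap_ι_mul hSx,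
    contractWith_single, hderi, complementMap_contractWith hder hSd hx, (hder j).map_ι_mul,
    Pi.single_apply]
  simp only [@eq_comm _ j i]
  rfl

theorem covCoeff_zero (z : ℂ) (i j : Fin n) :
    covCoeff n z der 0 i j = (if i = j then (1 : ℂ) else 0) • 1 := by
  split_ifs with h <;> simp [covCoeff, h]

theorem covCoeff_succ (z : ℂ) (r : ℕ) (i j : Fin n) :
    covCoeff n z der (r + 1) i j = -(z - 1) ^ r • (mulX n j * der i) := rfl

theorem vecDetCoeff_zero (z : ℂ) (i j : Fin n) :
    vecDetCoeff n z der 0 i j = (if i = j then (1 : ℂ) else 0) • 1 := by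
  split_ifs with h <;> simp [vecDetCoeff, h]

theorem vecDetCoeff_succ (z : ℂ) (r : ℕ) (i j : Fin n) :
    vecDetCoeff n z der (r + 1) i j
      = (z - 1) ^ r • (mulX n i * der j - (if i = j then (1 : ℂ) else 0) • 1) := by
  rw [vecDetCoeff, Finset.sum_range_succ']
  simp only [Nat.add_sub_add_right, Nat.add_sub_cancel, Nat.sub_zero, Nat.succ_ne_zero,
    if_false, if_true, smul_smul, ← Finset.sum_smul, sum_range_ite_mul_pow]
  rw [ite_smul, one_smul, zero_smul]
  module

theorem vecDetCoeff_complementMap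
    (hder : ∀ i, IsContraction (fun v : Fin n → ℂ => v i) (der i))
    (hSx : ∀ i, S (mulX n i) = der i) (hSd : ∀ i, S (der i) = mulX n i) {k : ℕ} {x : Grass n}
    (hx : x ∈ ⋀[ℂ]^k (Fin n → ℂ)) (z : ℂ) (r : ℕ) (i j : Fin n) :
    vecDetCoeff n z der r i j (complementMap S x)
      = complementMap S (covCoeff n z der r i j x) := by
  cases r with
  | zero => simp only [vecDetCoeff_zero, covCoeff_zero, LinearMap.smul_apply, map_smul,
      Module.End.one_apply]
  | succ r =>
    simp only [vecDetCoeff_succ, covCoeff_succ, LinearMap.smul_apply, LinearMap.sub_apply,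
      Module.End.one_apply, map_smul, complementMap_mulX_mul_der hder hSx hSd hx]
    module

end Grassmann

theorem covector_module_iso_vector_tensor_determinant_general (n d : ℕ) (hd : d ≤ n) (z : ℂ)
    (der : Fin n → Module.End ℂ (Grass n))
    (hder1 : ∀ i, der i 1 = 0)
    (hderL : ∀ (i : Fin n) (v : Fin n → ℂ) (x : Grass n),
      der i (ExteriorAlgebra.ι ℂ v * x) = v i • x - ExteriorAlgebra.ι ℂ v * der i x)
    (S : Module.End ℂ (Grass n) ≃ₐ[ℂ] Module.End ℂ (Grass n))
    (hSx : ∀ i, S (mulX n i) = der i)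
    (hSd : ∀ i, S (der i) = mulX n i) :
    letI R : Grass n → Grass n := fun x => S (LinearMap.mulLeft ℂ x) (topEl n)
    Set.BijOn R (GrassDeg n d : Set (Grass n)) (GrassDeg n (n - d) : Set (Grass n)) ∧
    ∀ x ∈ GrassDeg n d, ∀ (r : ℕ) (i j : Fin n),
      vecDetCoeff n z der r i j (R x) = R (covCoeff n z der r i j x) := by
  have hder : ∀ i, IsContraction (fun v : Fin n → ℂ => v i) (der i) :=
    fun i => ⟨hder1 i, hderL i⟩
  simp only [grassDeg_eq_exteriorPower]
  exact ⟨complementMap_bijOn hder hSx hSd hd,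
    fun x hx => vecDetCoeff_complementMap hder hSx hSd hx z⟩

theorem covector_module_iso_vector_tensor_determinant (n d : ℕ) (hd : d ≤ n) (z : ℂ)
    (der : Fin n → Module.End ℂ (Grass n))
    (hder1 : ∀ i, der i 1 = 0)
    (hderL : ∀ (i : Fin n) (v : Fin n → ℂ) (x : Grass n),
      der i (ExteriorAlgebra.ι ℂ v * x) = v i • x - ExteriorAlgebra.ι ℂ v * der i x)
    (S : Module.End ℂ (Grass n) ≃ₐ[ℂ] Module.End ℂ (Grass n))
    (hSx : ∀ i, S (mulX n i) = der i)
    (hSd : ∀ i, S (der i) = mulX n i)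
    (hSinv : ∀ Y, S (S Y) = Y) :
    letI R : Grass n → Grass n := fun x => S (LinearMap.mulLeft ℂ x) (topEl n)
    Set.BijOn R (GrassDeg n d : Set (Grass n)) (GrassDeg n (n - d) : Set (Grass n)) ∧
    ∀ x ∈ GrassDeg n d, ∀ (r : ℕ) (i j : Fin n),
      vecDetCoeff n z der r i j (R x) = R (covCoeff n z der r i j x) :=
  covector_module_iso_vector_tensor_determinant_general n d hd z der hder1 hderL S hSx hSd
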